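/- Shannon expansion of the Pareto front at a defense variable: let f be a Boolean function in variables 𝒟 ∪ 𝒜, let d ∈ 𝒟, and let f₀, f₁ be the cofactors of f at d = 0 and d = 1. Writing φ(δ) = (β̂_D(δ), β̂_A(ρ(δ))) for the valuation of defense vector δ together with the optimal attack response against it, the Pareto front satisfies min_⊑(φ(𝔹^𝒟)) = min_⊑( min_⊑(φ₀(𝔹^{𝒟∖{d}})) ∪ min_⊑({(s ⊗_D β_D(d), t) | (s,t) ∈ φ₁(𝔹^{𝒟∖{d}})}) ), where φ₀ and φ₁ are the analogous valuations for f₀ and f₁. -/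

import Mathlib

/-- Pareto dominance on `V_D × V_A`: `(s₁,t₁) ⊑ (s₂,t₂)` iff `s₁ ⪯_D s₂` and
`t₂ ⪯_A t₁`. -/
def paretoDom {VD VA : Type*} [LinearOrder VD] [LinearOrder VA]
    (p q : VD × VA) : Prop :=
  p.1 ≤ q.1 ∧ q.2 ≤ p.2

/-- The set of Pareto optimal (non-dominated) elements of `S`. -/
def paretoMin {VD VA : Type*} [LinearOrder VD] [LinearOrder VA]
    (S : Set (VD × VA)) : Set (VD × VA) :=
  {x ∈ S | ∀ x' ∈ S, paretoDom x' x → x' = x}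

section
variable {VD VA : Type*} [LinearOrder VD] [LinearOrder VA]

lemma paretoDom_refl (p : VD × VA) : paretoDom p p := ⟨le_refl _, le_refl _⟩

lemma paretoDom_trans {p q s : VD × VA} (h1 : paretoDom p q) (h2 : paretoDom q s) :
    paretoDom p s := ⟨h1.1.trans h2.1, h2.2.trans h1.2⟩

lemma paretoDom_antisymm {p q : VD × VA} (h1 : paretoDom p q) (h2 : paretoDom q p) :
    p = q := Prod.ext (le_antisymm h1.1 h2.1) (le_antisymm h2.2 h1.2)

lemma exists_paretoMin {S : Set (VD × VA)} (hS : S.Finite) {x : VD × VA} (hx : x ∈ S) :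
    ∃ m ∈ paretoMin S, paretoDom m x := by
  have hT : {y ∈ S | paretoDom y x}.Finite := hS.subset (fun y hy => hy.1)
  obtain ⟨m, hm, hmin⟩ := Set.Finite.exists_minimalFor
    (fun p : VD × VA => ((p.1, OrderDual.toDual p.2) : VD × VAᵒᵈ)) _ hT
    ⟨x, hx, paretoDom_refl x⟩
  refine ⟨m, ⟨hm.1, ?_⟩, hm.2⟩
  intro x' hx' hdom
  have hx'T : x' ∈ {y ∈ S | paretoDom y x} := ⟨hx', paretoDom_trans hdom hm.2⟩
  have heq := le_antisymm (hmin hx'T ⟨hdom.1, hdom.2⟩) ⟨hdom.1, hdom.2⟩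
  have h1 : m.1 = x'.1 := congrArg Prod.fst heq
  have h2 : m.2 = x'.2 := congrArg Prod.snd heq
  exact (Prod.ext h1 h2).symm

lemma paretoMin_union {S T : Set (VD × VA)} (hS : S.Finite) (hT : T.Finite) :
    paretoMin (S ∪ T) = paretoMin (paretoMin S ∪ paretoMin T) := by
  ext x
  constructor
  · rintro ⟨hx, hmin⟩
    have hxU : x ∈ paretoMin S ∪ paretoMin T := by
      rcases hx with h | h
      · obtain ⟨m, hmS, hmd⟩ := exists_paretoMin hS h
        have hmx : m = x := hmin m (Or.inl hmS.1) hmd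
        exact Or.inl (hmx ▸ hmS)
      · obtain ⟨m, hmT, hmd⟩ := exists_paretoMin hT h
        have hmx : m = x := hmin m (Or.inr hmT.1) hmd
        exact Or.inr (hmx ▸ hmT)
    refine ⟨hxU, fun x' hx' hd => hmin x' ?_ hd⟩
    rcases hx' with h | h
    · exact Or.inl h.1
    · exact Or.inr h.1
  · rintro ⟨hxU, hmin⟩
    have hx : x ∈ S ∪ T := by
      rcases hxU with h | h
      · exact Or.inl h.1
      · exact Or.inr h.1
    refine ⟨hx, fun x' hx' hd => ?_⟩
    rcases hx' with h | h
    · obtain ⟨m, hmS, hmd⟩ := exists_paretoMin hS h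
      have hmx : m = x := hmin m (Or.inl hmS) (paretoDom_trans hmd hd)
      exact paretoDom_antisymm hd (hmx ▸ hmd)
    · obtain ⟨m, hmT, hmd⟩ := exists_paretoMin hT h
      have hmx : m = x := hmin m (Or.inr hmT) (paretoDom_trans hmd hd)
      exact paretoDom_antisymm hd (hmx ▸ hmd)

end

/-- Shannon expansion of the Pareto front at a defense variable
`d`. Defense vectors are pairs `(δ, b)` with `δ ∈ 𝔹^{𝒟∖{d}}` and `b` the value
of `d`; `f δ b α` is the structure function, so the cofactors are
`f₀ δ α = f δ false α` and `f₁ δ α = f δ true α`. The function `r δ b`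
represents `β̂_A(ρ(δ, d↦b))`, characterized as the minimal attack value of a
successful attack, or `1_⊕` if none exists. Using
`β̂_D(δ, d↦0) = β̂_D(δ)` and `β̂_D(δ, d↦1) = β̂_D(δ) ⊗_D β_D(d)`, the Pareto
front satisfies
`min_⊑(φ(𝔹^𝒟)) = min_⊑(min_⊑(φ₀(𝔹^{𝒟∖{d}})) ∪ min_⊑({(s ⊗_D β_D(d), t) | (s,t) ∈ φ₁(𝔹^{𝒟∖{d}})}))`. -/

theorem shannon_expansion_pareto_front
    {D' A : Type*} [Finite D'] {VD VA : Type*} [LinearOrder VD] [LinearOrder VA]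
    (otimesD : VD → VD → VD) (topA : VA)
    (f : (D' → Bool) → Bool → (A → Bool) → Prop)
    (bhD : (D' → Bool) → VD) (bd : VD)
    (bhA : (A → Bool) → VA)
    (r : (D' → Bool) → Bool → VA)
    (hr : ∀ δ b,
      (∃ α, f δ b α ∧ bhA α = r δ b ∧ ∀ α', f δ b α' → r δ b ≤ bhA α') ∨
      ((∀ α, ¬ f δ b α) ∧ r δ b = topA)) :
    paretoMin {p : VD × VA | ∃ δ b,
        p = (if b then otimesD (bhD δ) bd else bhD δ, r δ b)} =
      paretoMin
        (paretoMin {p : VD × VA | ∃ δ, p = (bhD δ, r δ false)} ∪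
         paretoMin ((fun q : VD × VA => (otimesD q.1 bd, q.2)) ''
           {p : VD × VA | ∃ δ, p = (bhD δ, r δ true)})) := by

  classical
  set S : Set (VD × VA) := {p : VD × VA | ∃ δ, p = (bhD δ, r δ false)} with hSdef
  set T : Set (VD × VA) := (fun q : VD × VA => (otimesD q.1 bd, q.2)) ''
      {p : VD × VA | ∃ δ, p = (bhD δ, r δ true)} with hTdef
  have hS : S.Finite := by
    have : S = Set.range (fun δ : D' → Bool => (bhD δ, r δ false)) := by
      ext p; simp [hSdef, Set.mem_range, eq_comm]
    rw [this]; exact Set.finite_range _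
  have hT : T.Finite := by
    apply Set.Finite.image
    have : {p : VD × VA | ∃ δ, p = (bhD δ, r δ true)} =
        Set.range (fun δ : D' → Bool => (bhD δ, r δ true)) := by
      ext p; simp [Set.mem_range, eq_comm]
    rw [this]; exact Set.finite_range _
  have hset : {p : VD × VA | ∃ δ b,
      p = (if b then otimesD (bhD δ) bd else bhD δ, r δ b)} = S ∪ T := by
    ext p
    constructor
    · rintro ⟨δ, b, rfl⟩
      cases b
      · exact Or.inl ⟨δ, by simp⟩
      · exact Or.inr ⟨(bhD δ, r δ true), ⟨δ, rfl⟩, by simp⟩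
    · rintro (⟨δ, rfl⟩ | ⟨q, ⟨δ, rfl⟩, rfl⟩)
      · exact ⟨δ, false, by simp⟩
      · exact ⟨δ, true, by simp⟩
  rw [hset]
  exact paretoMin_union hS hT
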